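/- Let K = [[G, Aᵀ],[A, 0]] be a symmetric block matrix where G is a symmetric n×n real matrix and A is an m×n real matrix of full row rank m. If the inertia of K is (n, m, 0) (n positive, m negative, no zero eigenvalues), then ZᵀGZ is positive definite for any matrix Z whose columns form a basis of the null space of A. -/

import Mathlib

/-!
Suppose `xᵀ (ZᵀGZ) x ≤ 0` for some `x ≠ 0`, and put `u = Z x`, a nonzero vector of `ker A`.
On the `(m + 1)`-dimensional subspace `{(c u, y)}` the quadratic form of `K` equals
`c² uᵀGu ≤ 0`, since the cross term `yᵀA(c u)` vanishes. It therefore meets the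
`n`-dimensional span of the eigenvectors of `K` with positive eigenvalue, on which the form is
positive definite, only in `0`; so `(m + 1) + n ≤ n + m`, a contradiction.
-/

open Matrix Module Submodule

theorem Matrix.mulVec_injective_of_rank_eq_card {R m n : Type*} [Field R] [Fintype n]
    (Z : Matrix m n R) (hZ : Z.rank = Fintype.card n) : Function.Injective Z.mulVec := by
  have hrank := Z.mulVecLin.finrank_range_add_finrank_ker
  rw [show finrank R (LinearMap.range Z.mulVecLin) = Z.rank from rfl, hZ,
    finrank_fintype_fun_eq_card] at hrank
  have hker : finrank R (LinearMap.ker Z.mulVecLin) = 0 := by omega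
  exact LinearMap.ker_eq_bot.mp (Submodule.finrank_eq_zero.mp hker)

namespace Matrix.IsHermitian

variable {ι : Type*} [Fintype ι] [DecidableEq ι] {K : Matrix ι ι ℝ}

theorem dotProduct_mulVec_pos_of_mem_span_pos (hK : K.IsHermitian) {v : EuclideanSpace ℝ ι}
    (hv : v ∈ span ℝ (Set.range fun i : {i // 0 < hK.eigenvalues i} => hK.eigenvectorBasis i))
    (hv0 : v ≠ 0) : 0 < v.ofLp ⬝ᵥ K *ᵥ v.ofLp := by
  obtain ⟨c, rfl⟩ := (mem_span_range_iff_exists_fun ℝ).mp hv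
  set b := fun i : {i // 0 < hK.eigenvalues i} => hK.eigenvectorBasis i
  have hb : Orthonormal ℝ b := hK.eigenvectorBasis.orthonormal.comp _ Subtype.val_injective
  have hKv : WithLp.toLp 2 (K *ᵥ (∑ i, c i • b i).ofLp)
      = ∑ i, (c i * hK.eigenvalues i) • b i := by
    simp only [WithLp.ofLp_sum, WithLp.ofLp_smul, mulVec_sum, mulVec_smul, b,
      hK.mulVec_eigenvectorBasis, smul_smul, WithLp.toLp_sum, WithLp.toLp_smul, WithLp.toLp_ofLp]
  have hquad : (∑ i, c i • b i).ofLp ⬝ᵥ K *ᵥ (∑ i, c i • b i).ofLp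
      = ∑ i, c i * c i * hK.eigenvalues i := by
    rw [← WithLp.ofLp_toLp 2 (K *ᵥ _), hKv, dotProduct_comm,
      ← star_trivial (∑ i, c i • b i).ofLp, ← EuclideanSpace.inner_eq_star_dotProduct,
      hb.inner_sum]
    simp only [conj_trivial, mul_assoc]
  obtain ⟨i₀, hi₀⟩ : ∃ i, c i ≠ 0 := by
    by_contra! hc
    exact hv0 (by simp [hc])
  rw [hquad]
  refine Finset.sum_pos' (fun i _ => ?_) ⟨i₀, Finset.mem_univ _, ?_⟩
  · exact mul_nonneg (mul_self_nonneg _) i.2.le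
  · exact mul_pos (mul_self_pos.mpr hi₀) i₀.2

/-- The easy half of Sylvester's law of inertia. -/
theorem finrank_add_card_pos_eigenvalues_le (hK : K.IsHermitian) (S : Submodule ℝ (ι → ℝ))
    (hS : ∀ v ∈ S, v ⬝ᵥ K *ᵥ v ≤ 0) :
    finrank ℝ S + Nat.card {i // 0 < hK.eigenvalues i} ≤ Fintype.card ι := by
  set P := (span ℝ (Set.range fun i : {i // 0 < hK.eigenvalues i} => hK.eigenvectorBasis i)).map
    (WithLp.linearEquiv 2 ℝ (ι → ℝ)).toLinearMap
  have hP : finrank ℝ P = Nat.card {i // 0 < hK.eigenvalues i} := by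
    rw [LinearEquiv.finrank_map_eq, finrank_span_eq_card, Nat.card_eq_fintype_card]
    exact hK.eigenvectorBasis.orthonormal.linearIndependent.comp _ Subtype.val_injective
  have hdisj : Disjoint P S := by
    rw [Submodule.disjoint_def]
    rintro _ ⟨v, hv, rfl⟩ hvS
    by_contra hv0
    have hpos := hK.dotProduct_mulVec_pos_of_mem_span_pos hv (fun h => hv0 (by simp [h]))
    exact (hS _ hvS).not_gt hpos
  have := finrank_add_finrank_le_of_disjoint hdisj
  rwa [hP, finrank_fintype_fun_eq_card, add_comm] at this

end Matrix.IsHermitian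

theorem Matrix.sumElim_dotProduct_fromBlocks_mulVec {R ι κ : Type*} [CommRing R] [Fintype ι]
    [Fintype κ] (G : Matrix ι ι R) (A : Matrix κ ι R) {u : ι → R} (hu : A *ᵥ u = 0)
    (y : κ → R) :
    Sum.elim u y ⬝ᵥ fromBlocks G Aᵀ A 0 *ᵥ Sum.elim u y = u ⬝ᵥ G *ᵥ u := by
  rw [fromBlocks_mulVec, Sum.elim_comp_inl, Sum.elim_comp_inr, hu, zero_mulVec, add_zero,
    sumElim_dotProduct_sumElim, dotProduct_zero, add_zero, dotProduct_add,
    dotProduct_mulVec u Aᵀ, vecMul_transpose, hu, zero_dotProduct, add_zero]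

theorem Matrix.card_pos_eigenvalues_fromBlocks_lt {ι κ : Type*} [Fintype ι] [Fintype κ]
    [DecidableEq ι] [DecidableEq κ] {G : Matrix ι ι ℝ} {A : Matrix κ ι ℝ}
    (hK : (fromBlocks G Aᵀ A 0).IsHermitian) {u : ι → ℝ} (hu0 : u ≠ 0) (hAu : A *ᵥ u = 0)
    (hGu : u ⬝ᵥ G *ᵥ u ≤ 0) : Nat.card {i // 0 < hK.eigenvalues i} < Fintype.card ι := by
  -- `L (c, y) = Sum.elim (c • u) y`
  let L : ℝ × (κ → ℝ) →ₗ[ℝ] (ι ⊕ κ → ℝ) :=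
    (LinearEquiv.sumArrowLequivProdArrow ι κ ℝ ℝ).symm.toLinearMap ∘ₗ
      (LinearMap.toSpanSingleton ℝ _ u).prodMap LinearMap.id
  have hL : Function.Injective L := by
    rw [LinearMap.coe_comp, LinearMap.coe_prodMap]
    exact (LinearEquiv.injective _).comp
      ((smul_left_injective ℝ hu0).prodMap Function.injective_id)
  have hS : ∀ v ∈ LinearMap.range L, v ⬝ᵥ fromBlocks G Aᵀ A 0 *ᵥ v ≤ 0 := by
    rintro _ ⟨⟨c, y⟩, rfl⟩
    change Sum.elim (c • u) y ⬝ᵥ _ *ᵥ Sum.elim (c • u) y ≤ 0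
    have hAcu : A *ᵥ (c • u) = 0 := by rw [mulVec_smul, hAu, smul_zero]
    rw [sumElim_dotProduct_fromBlocks_mulVec G A hAcu,
      mulVec_smul, dotProduct_smul, smul_dotProduct, smul_smul, smul_eq_mul]
    exact mul_nonpos_of_nonneg_of_nonpos (mul_self_nonneg c) hGu
  have := hK.finrank_add_card_pos_eigenvalues_le _ hS
  rw [LinearMap.finrank_range_of_inj hL, finrank_prod, finrank_self, finrank_fintype_fun_eq_card,
    Fintype.card_sum] at this
  omega

theorem stmt_19_general (n m : ℕ)
    (G : Matrix (Fin n) (Fin n) ℝ) (hG : G.IsHermitian)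
    (A : Matrix (Fin m) (Fin n) ℝ)
    (K : Matrix (Fin n ⊕ Fin m) (Fin n ⊕ Fin m) ℝ)
    (hK : K = Matrix.fromBlocks G Aᵀ A 0)
    (hKh : K.IsHermitian)
    (hposCount : Nat.card {i // 0 < hKh.eigenvalues i} = n)
    (Z : Matrix (Fin n) (Fin (n - m)) ℝ)
    (hZker : A * Z = 0) (hZrank : Z.rank = n - m) :
    (Zᵀ * G * Z).PosDef := by
  subst hK
  have hherm : (Zᵀ * G * Z).IsHermitian := by
    simpa [conjTranspose_eq_transpose_of_trivial] using isHermitian_conjTranspose_mul_mul Z hG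
  refine PosDef.of_dotProduct_mulVec_pos hherm fun x hx => ?_
  rw [star_trivial]
  by_contra! hGx
  have hquad : x ⬝ᵥ (Zᵀ * G * Z) *ᵥ x = Z *ᵥ x ⬝ᵥ G *ᵥ (Z *ᵥ x) := by
    rw [← mulVec_mulVec, ← mulVec_mulVec, dotProduct_mulVec, vecMul_transpose]
  have hZx : Z *ᵥ x ≠ 0 := fun h =>
    hx (Z.mulVec_injective_of_rank_eq_card (by simpa using hZrank) (h.trans (mulVec_zero Z).symm))
  have := card_pos_eigenvalues_fromBlocks_lt hKh hZx
    (by rw [mulVec_mulVec, hZker, zero_mulVec]) (hquad ▸ hGx)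
  rw [hposCount, Fintype.card_fin] at this
  exact lt_irrefl n this

theorem stmt_19 (n m : ℕ) (hmn : m ≤ n)
    (G : Matrix (Fin n) (Fin n) ℝ) (hG : G.IsHermitian)
    (A : Matrix (Fin m) (Fin n) ℝ) (hA : A.rank = m)
    (K : Matrix (Fin n ⊕ Fin m) (Fin n ⊕ Fin m) ℝ)
    (hK : K = Matrix.fromBlocks G Aᵀ A 0)
    (hKh : K.IsHermitian)
    (hposCount : Nat.card {i // 0 < hKh.eigenvalues i} = n)
    (hnegCount : Nat.card {i // hKh.eigenvalues i < 0} = m)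
    (hnozero : ∀ i, hKh.eigenvalues i ≠ 0)
    (Z : Matrix (Fin n) (Fin (n - m)) ℝ)
    (hZker : A * Z = 0) (hZrank : Z.rank = n - m) :
    (Zᵀ * G * Z).PosDef :=
  stmt_19_general n m G hG A K hK hKh hposCount Z hZker hZrank
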